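/- A planar closed curve containing both a right-handed cusp and a left-handed cusp is not the projection to the xy-plane of a profile curve generated by any immersed surface in R^3. -/

import Mathlib

noncomputable section
open Real Set Filter Metric Topology

/-- We model `ℝ³` as `Fin 3 → ℝ`. -/
abbrev R3 := Fin 3 → ℝ

def dot3 (x y : R3) : ℝ := ∑ i, x i * y i
def enorm3 (x : R3) : ℝ := Real.sqrt (dot3 x x)
def cross3 (x y : R3) : R3 :=
  ![x 1 * y 2 - x 2 * y 1, x 2 * y 0 - x 0 * y 2, x 0 * y 1 - x 1 * y 0]
/-- The vertical direction. -/
def e3 : R3 := ![0, 0, 1]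
/-- Orthogonal projection to the `xy`-plane. -/
def projxy (v : R3) : R3 := ![v 0, v 1, 0]
def det2 (u v : R3) : ℝ := u 0 * v 1 - u 1 * v 0

/-- A smooth embedded closed curve, parametrized with period 1. -/
def IsSmoothLoop (γ : ℝ → R3) : Prop :=
  ContDiff ℝ (⊤ : ℕ∞) γ ∧ Function.Periodic γ 1 ∧ InjOn γ (Ico 0 1) ∧ ∀ t, deriv γ t ≠ 0

/-- The Gauss linking integral of two disjoint closed curves. -/
def linkingNumber (γ δ : ℝ → R3) : ℝ :=
  (1 / (4 * π)) *
    ∫ s in (0:ℝ)..1, ∫ t in (0:ℝ)..1,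
      dot3 (cross3 (deriv γ s) (deriv δ t)) (γ s - δ t) / (enorm3 (γ s - δ t)) ^ 3

/-- Push-off of a curve along a vector field by distance `ε`. -/
def pushoff (γ : ℝ → R3) (v : ℝ → R3) (ε : ℝ) : ℝ → R3 := fun t => γ t + ε • v t

/-- The linking number of `γ` with its push-off distance `ε` along the surface normal `ν`. -/
def surfLinkE (γ : ℝ → R3) (ν : R3 → R3) (ε : ℝ) : ℝ :=
  linkingNumber γ (pushoff γ (fun t => ν (γ t)) ε)

/-- The surface linking number `λ(γ, F)`: the linking number of `γ` with its
push-off along the surface normal `ν`, for sufficiently small `ε > 0`. -/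
def surfLink (γ : ℝ → R3) (ν : R3 → R3) : ℝ :=
  limUnder (𝓝[>] (0:ℝ)) (surfLinkE γ ν)

/-- The blackboard framing: the horizontal unit vector field normal to `γ̇`. -/
def blackboard (γ : ℝ → R3) : ℝ → R3 :=
  fun t => (enorm3 (cross3 e3 (deriv γ t)))⁻¹ • cross3 e3 (deriv γ t)

/-- The writhe: self-linking of `γ` with respect to the blackboard framing. -/
def writhe (γ : ℝ → R3) : ℝ :=
  limUnder (𝓝[>] (0:ℝ)) (fun ε => linkingNumber γ (pushoff γ (blackboard γ) ε))

/-- A smoothly embedded surface: locally a regular level set of a smooth function. -/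
def IsSurface (F : Set R3) : Prop :=
  ∀ p ∈ F, ∃ U : Set R3, ∃ f : R3 → ℝ,
    IsOpen U ∧ p ∈ U ∧ ContDiff ℝ (⊤ : ℕ∞) f ∧ (∀ x ∈ U, fderiv ℝ f x ≠ 0) ∧
    F ∩ U = {x | x ∈ U ∧ f x = 0}

/-- `v` is a tangent vector of `F` at `p`. -/
def TangentAt (F : Set R3) (p v : R3) : Prop :=
  ∃ c : ℝ → R3, ContDiff ℝ (⊤ : ℕ∞) c ∧ c 0 = p ∧ (∀ t, c t ∈ F) ∧ deriv c 0 = v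

/-- `ν` is a continuous unit normal vector field on `F`. -/
def IsUnitNormal (F : Set R3) (ν : R3 → R3) : Prop :=
  Continuous ν ∧ ∀ p ∈ F, dot3 (ν p) (ν p) = 1 ∧ ∀ v, TangentAt F p v → dot3 (ν p) v = 0

/-- The tangent plane of `F` at `p` is vertical (contains the vertical direction). -/
def VerticalTangentAt (F : Set R3) (p : R3) : Prop := TangentAt F p e3

/-- The set of profile points of a surface. -/
def profileSet (F : Set R3) : Set R3 := {p | p ∈ F ∧ VerticalTangentAt F p}

/-- The number of profile curves of `F` (connected components of the profile set). -/
def profileCount (F : Set R3) : ℕ := Nat.card (ConnectedComponents ↥(profileSet F))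

/-- `γ` is a profile curve of `F`: it lies on `F`, the tangent plane of `F` is
vertical along `γ`, and near `γ` it is vertical only on `γ` (fold locus). -/
def IsProfileCurve (γ : ℝ → R3) (F : Set R3) : Prop :=
  IsSmoothLoop γ ∧ (∀ t, γ t ∈ F) ∧ (∀ t, VerticalTangentAt F (γ t)) ∧
  ∃ U : Set R3, IsOpen U ∧ range γ ⊆ U ∧
    ∀ p ∈ F ∩ U, VerticalTangentAt F p → p ∈ range γ

/-- An ambient isotopy of `ℝ³`. -/
def IsAmbientIsotopy (H : ℝ → R3 → R3) : Prop :=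
  Continuous (fun q : ℝ × R3 => H q.1 q.2) ∧ (∀ x, H 0 x = x) ∧
    ∀ t, Function.Bijective (H t)

/-- A smooth ambient isotopy of `ℝ³`. -/
def IsSmoothAmbientIsotopy (H : ℝ → R3 → R3) : Prop :=
  IsAmbientIsotopy H ∧ ContDiff ℝ (⊤ : ℕ∞) (fun q : ℝ × R3 => H q.1 q.2)

/-- Ambient equivalence (isotopy) of subsets of `ℝ³`. -/
def AmbientEquiv (L L' : Set R3) : Prop :=
  ∃ H, IsAmbientIsotopy H ∧ H 1 '' L = L'

/-- A system of pairwise disjoint smooth loops on `F`. -/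
def DisjointLoopSystem (F : Set R3) {n : ℕ} (c : Fin n → ℝ → R3) : Prop :=
  (∀ i, IsSmoothLoop (c i) ∧ ∀ t, c i t ∈ F) ∧
  ∀ i j, i ≠ j → Disjoint (range (c i)) (range (c j))

/-- A closed connected surface has genus `g` iff `g` is the maximal number of
disjoint simple closed curves that can be removed without disconnecting it. -/
def HasGenus (F : Set R3) (g : ℕ) : Prop :=
  IsSurface F ∧ IsCompact F ∧ IsConnected F ∧
  (∃ c : Fin g → ℝ → R3, DisjointLoopSystem F c ∧
    IsConnected (F \ ⋃ i, range (c i))) ∧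
  ∀ c : Fin (g + 1) → ℝ → R3, DisjointLoopSystem F c →
    ¬ IsConnected (F \ ⋃ i, range (c i))

/-- The `k`-th standard round circle in the `xy`-plane. -/
def stdCircle (k : ℕ) : ℝ → R3 :=
  fun t => ![(3 * k : ℝ) + Real.cos (2 * π * t), Real.sin (2 * π * t), 0]

/-- `L` is an unlink with `n` components. -/
def IsUnlink (L : Set R3) (n : ℕ) : Prop :=
  ∃ H, IsAmbientIsotopy H ∧ H 1 '' L = ⋃ i : Fin n, range (stdCircle (i : ℕ))

def IsUnknot (γ : ℝ → R3) : Prop := AmbientEquiv (range γ) (range (stdCircle 0))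

/-- A standard parametrized trefoil knot. -/
def trefoil : ℝ → R3 := fun t =>
  ![(2 + Real.cos (6 * π * t)) * Real.cos (4 * π * t),
    (2 + Real.cos (6 * π * t)) * Real.sin (4 * π * t),
    Real.sin (6 * π * t)]

def IsTrefoil (γ : ℝ → R3) : Prop := AmbientEquiv (range γ) (range trefoil)

/-- The standard (unknotted) torus of revolution. -/
def stdTorus : Set R3 :=
  {x | (Real.sqrt (x 0 ^ 2 + x 1 ^ 2) - 2) ^ 2 + (x 2) ^ 2 = 1}

def stdSolidTorus : Set R3 :=
  {x | (Real.sqrt (x 0 ^ 2 + x 1 ^ 2) - 2) ^ 2 + (x 2) ^ 2 ≤ 1}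

def IsTorus (F : Set R3) : Prop := IsSurface F ∧ Nonempty (↥F ≃ₜ ↥stdTorus)

def IsUnknottedTorus (F : Set R3) : Prop := IsTorus F ∧ AmbientEquiv F stdTorus

/-- `γ` bounds an embedded disk inside `S`. -/
def BoundsDiskIn (γ : ℝ → R3) (S : Set R3) : Prop :=
  ∃ f : EuclideanSpace ℝ (Fin 2) → R3,
    ContinuousOn f (closedBall 0 1) ∧ InjOn f (closedBall 0 1) ∧
    f '' closedBall 0 1 ⊆ S ∧ f '' sphere 0 1 = range γ

/-- `γ` is null-homotopic on `F` (as a free loop). -/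
def NullHomotopicOn (γ : ℝ → R3) (F : Set R3) : Prop :=
  ∃ Γ : ℝ → ℝ → R3, Continuous (fun q : ℝ × ℝ => Γ q.1 q.2) ∧
    (∀ t, Γ 0 t = γ t) ∧ (∀ u t, Γ u t ∈ F) ∧ (∀ u, Function.Periodic (Γ u) 1) ∧
    ∃ p, ∀ t, Γ 1 t = p

/-- The projection of `γ` has a cusp at `t`: the tangent there is vertical. -/
def IsCuspAt (γ : ℝ → R3) (t : ℝ) : Prop := projxy (deriv γ t) = 0

/-- Right-handed cusp: the projected curve turns right through the cusp. -/
def RightCuspAt (γ : ℝ → R3) (t : ℝ) : Prop :=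
  IsCuspAt γ t ∧ det2 (iteratedDeriv 2 γ t) (iteratedDeriv 3 γ t) < 0

/-- Left-handed cusp: the projected curve turns left through the cusp. -/
def LeftCuspAt (γ : ℝ → R3) (t : ℝ) : Prop :=
  IsCuspAt γ t ∧ 0 < det2 (iteratedDeriv 2 γ t) (iteratedDeriv 3 γ t)

/-- Parameters (in one period) where the projection of `γ` has a cusp. -/
def cuspSet (γ : ℝ → R3) : Set ℝ := {t ∈ Ico (0:ℝ) 1 | IsCuspAt γ t}

/-- `γ` has an annular (two-sided) neighborhood inside `F`. -/
def HasAnnularNbhd (γ : ℝ → R3) (F : Set R3) : Prop :=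
  ∃ A : ℝ → ℝ → R3, Continuous (fun q : ℝ × ℝ => A q.1 q.2) ∧
    (∀ t, A t 0 = γ t) ∧ (∀ t s, A (t + 1) s = A t s) ∧
    InjOn (fun q : ℝ × ℝ => A q.1 q.2) (Ico 0 1 ×ˢ Ioo (-1) 1) ∧
    ∀ t s, s ∈ Ioo (-1:ℝ) 1 → A t s ∈ F

/-- `γ` has a Möbius-band (one-sided) neighborhood inside `F`. -/
def HasMobiusNbhd (γ : ℝ → R3) (F : Set R3) : Prop :=
  ∃ A : ℝ → ℝ → R3, Continuous (fun q : ℝ × ℝ => A q.1 q.2) ∧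
    (∀ t, A t 0 = γ t) ∧ (∀ t s, A (t + 1) s = A t (-s)) ∧
    InjOn (fun q : ℝ × ℝ => A q.1 q.2) (Ico 0 1 ×ˢ Ioo (-1) 1) ∧
    ∀ t s, s ∈ Ioo (-1:ℝ) 1 → A t s ∈ F

/-- The crossings of the planar projection of `γ` (in one period). -/
def crossingPairs (γ : ℝ → R3) : Set (ℝ × ℝ) :=
  {p | p.1 ∈ Ico (0:ℝ) 1 ∧ p.2 ∈ Ico (0:ℝ) 1 ∧ p.1 < p.2 ∧
    projxy (γ p.1) = projxy (γ p.2)}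

/-- The sign of a crossing of the projection of `γ`. -/
def crossingSign (γ : ℝ → R3) (s t : ℝ) : ℝ :=
  if γ s 2 > γ t 2 then Real.sign (det2 (deriv γ s) (deriv γ t))
  else Real.sign (det2 (deriv γ t) (deriv γ s))

/-- `γ'` is obtained from `γ` by a Reidemeister I move of sign `σ`, by an isotopy
supported in a small ball: outside the ball nothing changes, inside it `γ` has no
crossings and `γ'` has exactly one crossing, of sign `σ`. -/
def R1Move (γ γ' : ℝ → R3) (σ : ℝ) : Prop :=
  ∃ c : R3, ∃ ρ : ℝ, 0 < ρ ∧
    (∀ t, γ' t = γ t ∨ (γ t ∈ ball c ρ ∧ γ' t ∈ ball c ρ)) ∧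
    (∃ H, IsAmbientIsotopy H ∧ (∀ u x, x ∉ ball c ρ → H u x = x) ∧
      ∀ t, H 1 (γ t) = γ' t) ∧
    (∀ p ∈ crossingPairs γ, γ p.1 ∉ ball c ρ) ∧
    (∃ p ∈ crossingPairs γ', γ' p.1 ∈ ball c ρ ∧ crossingSign γ' p.1 p.2 = σ ∧
      ∀ q ∈ crossingPairs γ', γ' q.1 ∈ ball c ρ → q = p)

/-- `γ` is a profile curve generated by an immersed surface strip along it:
there is a smooth immersed strip `A` with `A t 0 = γ t`, whose tangent plane is
vertical exactly along `γ` (fold locus). -/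
def ProfileOfImmersedSurface (γ : ℝ → R3) : Prop :=
  IsSmoothLoop γ ∧ ∃ A : ℝ → ℝ → R3,
    ContDiff ℝ (⊤ : ℕ∞) (fun q : ℝ × ℝ => A q.1 q.2) ∧ (∀ t, A t 0 = γ t) ∧
    (∀ t s, cross3 (deriv (fun u => A u s) t) (deriv (A t) s) ≠ 0) ∧
    (∀ t, dot3 (cross3 (deriv (fun u => A u 0) t) (deriv (A t) 0)) e3 = 0) ∧
    (∀ t s, s ≠ 0 → dot3 (cross3 (deriv (fun u => A u s) t) (deriv (A t) s)) e3 ≠ 0)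

namespace OC


def Dt (h : ℝ × ℝ → ℝ) : ℝ × ℝ → ℝ := fun q => fderiv ℝ h q (1, 0)
def Ds (h : ℝ × ℝ → ℝ) : ℝ × ℝ → ℝ := fun q => fderiv ℝ h q (0, 1)

lemma hasDerivAt_fst {E : Type*} [NormedAddCommGroup E] [NormedSpace ℝ E]
    {h : ℝ × ℝ → E} (hh : ContDiff ℝ (⊤ : ℕ∞) h) (t s : ℝ) :
    HasDerivAt (fun u => h (u, s)) (fderiv ℝ h (t, s) (1, 0)) t := by
  have hd : HasFDerivAt h (fderiv ℝ h (t, s)) (t, s) :=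
    (hh.differentiable (by simp) (t, s)).hasFDerivAt
  have hc : HasDerivAt (fun u : ℝ => (u, s)) ((1 : ℝ), (0 : ℝ)) t :=
    HasDerivAt.prodMk (hasDerivAt_id t) (hasDerivAt_const t s)
  exact hd.comp_hasDerivAt t hc

lemma hasDerivAt_snd {E : Type*} [NormedAddCommGroup E] [NormedSpace ℝ E]
    {h : ℝ × ℝ → E} (hh : ContDiff ℝ (⊤ : ℕ∞) h) (t s : ℝ) :
    HasDerivAt (fun v => h (t, v)) (fderiv ℝ h (t, s) (0, 1)) s := by
  have hd : HasFDerivAt h (fderiv ℝ h (t, s)) (t, s) :=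
    (hh.differentiable (by simp) (t, s)).hasFDerivAt
  have hc : HasDerivAt (fun v : ℝ => (t, v)) ((0 : ℝ), (1 : ℝ)) s :=
    HasDerivAt.prodMk (hasDerivAt_const s t) (hasDerivAt_id s)
  exact hd.comp_hasDerivAt s hc

lemma contDiff_Dt {h : ℝ × ℝ → ℝ} (hh : ContDiff ℝ (⊤ : ℕ∞) h) : ContDiff ℝ (⊤ : ℕ∞) (Dt h) :=
  (hh.fderiv_right (by simp)).clm_apply contDiff_const

lemma contDiff_Ds {h : ℝ × ℝ → ℝ} (hh : ContDiff ℝ (⊤ : ℕ∞) h) : ContDiff ℝ (⊤ : ℕ∞) (Ds h) :=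
  (hh.fderiv_right (by simp)).clm_apply contDiff_const

lemma clairaut {h : ℝ × ℝ → ℝ} (hh : ContDiff ℝ (⊤ : ℕ∞) h) (q : ℝ × ℝ) :
    Ds (Dt h) q = Dt (Ds h) q := by
  have hf' : ContDiff ℝ (⊤ : ℕ∞) (fderiv ℝ h) := hh.fderiv_right (by simp)
  have h1 : HasFDerivAt (fderiv ℝ h) (fderiv ℝ (fderiv ℝ h) q) q :=
    (hf'.differentiable (by simp) q).hasFDerivAt
  have key : ∀ v w : ℝ × ℝ, fderiv ℝ (fun p => fderiv ℝ h p v) q w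
      = fderiv ℝ (fderiv ℝ h) q w v := by
    intro v w
    have h2 : HasFDerivAt (fun p => fderiv ℝ h p v)
        ((fderiv ℝ h q).comp (0 : (ℝ×ℝ) →L[ℝ] (ℝ×ℝ)) +
          (fderiv ℝ (fderiv ℝ h) q).flip v) q :=
      h1.clm_apply (hasFDerivAt_const v q)
    rw [h2.fderiv]
    simp
  have hsym : ∀ v w : ℝ × ℝ,
      fderiv ℝ (fderiv ℝ h) q v w = fderiv ℝ (fderiv ℝ h) q w v := by
    intro v w
    exact second_derivative_symmetric (fun y => ((hh.differentiable (by simp) y).hasFDerivAt)) h1 v w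
  show fderiv ℝ (fun p => fderiv ℝ h p (1,0)) q (0,1) = fderiv ℝ (fun p => fderiv ℝ h p (0,1)) q (1,0)
  rw [key, key, hsym]

lemma alg_key (A B C D v0 v1 w0 w1 : ℝ) (hv : ¬ (v0 = 0 ∧ v1 = 0))
    (hE1 : A * v1 - B * v0 = 0)
    (hE2 : C * v1 + 2 * A * w1 - (D * v0 + 2 * B * w0) = 0) :
    (A * D - B * C) * (w0 * v1 - w1 * v0) ≤ 0 ∧
      ((A * D - B * C) ≠ 0 → (w0 * v1 - w1 * v0) ≠ 0) := by
  have k0 : (A * D - B * C) * v0 ^ 2 = -2 * A ^ 2 * (w0 * v1 - w1 * v0) := by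
    linear_combination (C * v0 + 2 * A * w0) * hE1 - A * v0 * hE2
  have k1 : (A * D - B * C) * v1 ^ 2 = -2 * B ^ 2 * (w0 * v1 - w1 * v0) := by
    linear_combination (D * v1 + 2 * B * w1) * hE1 - B * v1 * hE2
  have hvv : 0 < v0 ^ 2 + v1 ^ 2 := by
    rcases not_and_or.mp hv with h | h
    · positivity
    · positivity
  constructor
  · have m0 : (A * D - B * C) * (w0 * v1 - w1 * v0) * v0 ^ 2
        = -2 * (A * (w0 * v1 - w1 * v0)) ^ 2 := by
      linear_combination (w0 * v1 - w1 * v0) * k0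
    have m1 : (A * D - B * C) * (w0 * v1 - w1 * v0) * v1 ^ 2
        = -2 * (B * (w0 * v1 - w1 * v0)) ^ 2 := by
      linear_combination (w0 * v1 - w1 * v0) * k1
    by_contra hcon
    push_neg at hcon
    nlinarith [mul_pos hcon hvv, sq_nonneg (A * (w0 * v1 - w1 * v0)),
      sq_nonneg (B * (w0 * v1 - w1 * v0))]
  · intro hσ hd
    rw [hd] at k0 k1
    simp only [mul_zero] at k0 k1
    have : (A * D - B * C) * (v0 ^ 2 + v1 ^ 2) = 0 := by linarith
    rcases mul_eq_zero.mp this with h | h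
    · exact hσ h
    · exact absurd h (ne_of_gt hvv)

/-- Core chirality computation at a cusp. -/
lemma cusp_key (a0 a1 : ℝ × ℝ → ℝ) (ha0 : ContDiff ℝ (⊤ : ℕ∞) a0) (ha1 : ContDiff ℝ (⊤ : ℕ∞) a1) (t₀ : ℝ)
    (hg0 : ∀ t, Dt a0 (t,0) * Ds a1 (t,0) - Dt a1 (t,0) * Ds a0 (t,0) = 0)
    (hz0 : Dt a0 (t₀,0) = 0) (hz1 : Dt a1 (t₀,0) = 0)
    (hnz : ¬ (Ds a0 (t₀,0) = 0 ∧ Ds a1 (t₀,0) = 0)) :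
    ∃ d : ℝ,
      HasDerivAt (fun s => Dt a0 (t₀,s) * Ds a1 (t₀,s) - Dt a1 (t₀,s) * Ds a0 (t₀,s)) d 0 ∧
      (Dt (Dt a0) (t₀,0) * Dt (Dt (Dt a1)) (t₀,0)
        - Dt (Dt a1) (t₀,0) * Dt (Dt (Dt a0)) (t₀,0)) * d ≤ 0 ∧
      ((Dt (Dt a0) (t₀,0) * Dt (Dt (Dt a1)) (t₀,0)
        - Dt (Dt a1) (t₀,0) * Dt (Dt (Dt a0)) (t₀,0)) ≠ 0 → d ≠ 0) := by
  have hp0 : ContDiff ℝ (⊤ : ℕ∞) (Dt a0) := contDiff_Dt ha0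
  have hp1 : ContDiff ℝ (⊤ : ℕ∞) (Dt a1) := contDiff_Dt ha1
  have hq0 : ContDiff ℝ (⊤ : ℕ∞) (Ds a0) := contDiff_Ds ha0
  have hq1 : ContDiff ℝ (⊤ : ℕ∞) (Ds a1) := contDiff_Ds ha1
  -- first derivative of the fold identity along s = 0
  have hG : ∀ t, HasDerivAt (fun t => Dt a0 (t,0) * Ds a1 (t,0) - Dt a1 (t,0) * Ds a0 (t,0))
      (Dt (Dt a0) (t,0) * Ds a1 (t,0) + Dt a0 (t,0) * Dt (Ds a1) (t,0)
        - (Dt (Dt a1) (t,0) * Ds a0 (t,0) + Dt a1 (t,0) * Dt (Ds a0) (t,0))) t :=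
    fun t => ((hasDerivAt_fst hp0 t 0).mul (hasDerivAt_fst hq1 t 0)).sub
      ((hasDerivAt_fst hp1 t 0).mul (hasDerivAt_fst hq0 t 0))
  have hGzero : ∀ t, Dt (Dt a0) (t,0) * Ds a1 (t,0) + Dt a0 (t,0) * Dt (Ds a1) (t,0)
      - (Dt (Dt a1) (t,0) * Ds a0 (t,0) + Dt a1 (t,0) * Dt (Ds a0) (t,0)) = 0 := by
    intro t
    have h1 := hG t
    have h2 : (fun t => Dt a0 (t,0) * Ds a1 (t,0) - Dt a1 (t,0) * Ds a0 (t,0))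
        = (fun _ : ℝ => (0:ℝ)) := funext hg0
    rw [h2] at h1
    exact h1.unique (hasDerivAt_const t 0)
  -- second derivative of the fold identity along s = 0
  have hG2 : HasDerivAt (fun t => Dt (Dt a0) (t,0) * Ds a1 (t,0) + Dt a0 (t,0) * Dt (Ds a1) (t,0)
      - (Dt (Dt a1) (t,0) * Ds a0 (t,0) + Dt a1 (t,0) * Dt (Ds a0) (t,0)))
      ((Dt (Dt (Dt a0)) (t₀,0) * Ds a1 (t₀,0) + Dt (Dt a0) (t₀,0) * Dt (Ds a1) (t₀,0)
        + (Dt (Dt a0) (t₀,0) * Dt (Ds a1) (t₀,0) + Dt a0 (t₀,0) * Dt (Dt (Ds a1)) (t₀,0)))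
        - (Dt (Dt (Dt a1)) (t₀,0) * Ds a0 (t₀,0) + Dt (Dt a1) (t₀,0) * Dt (Ds a0) (t₀,0)
        + (Dt (Dt a1) (t₀,0) * Dt (Ds a0) (t₀,0) + Dt a1 (t₀,0) * Dt (Dt (Ds a0)) (t₀,0)))) t₀ :=
    ((((hasDerivAt_fst (contDiff_Dt hp0) t₀ 0).mul (hasDerivAt_fst hq1 t₀ 0)).add
      ((hasDerivAt_fst hp0 t₀ 0).mul (hasDerivAt_fst (contDiff_Dt hq1) t₀ 0))).sub
     (((hasDerivAt_fst (contDiff_Dt hp1) t₀ 0).mul (hasDerivAt_fst hq0 t₀ 0)).add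
      ((hasDerivAt_fst hp1 t₀ 0).mul (hasDerivAt_fst (contDiff_Dt hq0) t₀ 0))))
  have hG2zero : (Dt (Dt (Dt a0)) (t₀,0) * Ds a1 (t₀,0) + Dt (Dt a0) (t₀,0) * Dt (Ds a1) (t₀,0)
        + (Dt (Dt a0) (t₀,0) * Dt (Ds a1) (t₀,0) + Dt a0 (t₀,0) * Dt (Dt (Ds a1)) (t₀,0)))
        - (Dt (Dt (Dt a1)) (t₀,0) * Ds a0 (t₀,0) + Dt (Dt a1) (t₀,0) * Dt (Ds a0) (t₀,0)
        + (Dt (Dt a1) (t₀,0) * Dt (Ds a0) (t₀,0) + Dt a1 (t₀,0) * Dt (Dt (Ds a0)) (t₀,0))) = 0 := by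
    have h2 : (fun t => Dt (Dt a0) (t,0) * Ds a1 (t,0) + Dt a0 (t,0) * Dt (Ds a1) (t,0)
        - (Dt (Dt a1) (t,0) * Ds a0 (t,0) + Dt a1 (t,0) * Dt (Ds a0) (t,0)))
        = (fun _ : ℝ => (0:ℝ)) := funext hGzero
    have h1 := hG2
    rw [h2] at h1
    exact h1.unique (hasDerivAt_const t₀ 0)
  -- derivative in the s direction
  have hDs : HasDerivAt (fun s => Dt a0 (t₀,s) * Ds a1 (t₀,s) - Dt a1 (t₀,s) * Ds a0 (t₀,s))
      (Ds (Dt a0) (t₀,0) * Ds a1 (t₀,0) + Dt a0 (t₀,0) * Ds (Ds a1) (t₀,0)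
        - (Ds (Dt a1) (t₀,0) * Ds a0 (t₀,0) + Dt a1 (t₀,0) * Ds (Ds a0) (t₀,0))) 0 :=
    ((hasDerivAt_snd hp0 t₀ 0).mul (hasDerivAt_snd hq1 t₀ 0)).sub
      ((hasDerivAt_snd hp1 t₀ 0).mul (hasDerivAt_snd hq0 t₀ 0))
  refine ⟨_, hDs, ?_, ?_⟩
  all_goals {
    have hE1 : Dt (Dt a0) (t₀,0) * Ds a1 (t₀,0) - Dt (Dt a1) (t₀,0) * Ds a0 (t₀,0) = 0 := by
      have := hGzero t₀; rw [hz0, hz1] at this; linarith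
    have hE2 : Dt (Dt (Dt a0)) (t₀,0) * Ds a1 (t₀,0) + 2 * Dt (Dt a0) (t₀,0) * Dt (Ds a1) (t₀,0)
        - (Dt (Dt (Dt a1)) (t₀,0) * Ds a0 (t₀,0) + 2 * Dt (Dt a1) (t₀,0) * Dt (Ds a0) (t₀,0)) = 0 := by
      have := hG2zero; rw [hz0, hz1] at this; linarith
    have hdval : Ds (Dt a0) (t₀,0) * Ds a1 (t₀,0) + Dt a0 (t₀,0) * Ds (Ds a1) (t₀,0)
        - (Ds (Dt a1) (t₀,0) * Ds a0 (t₀,0) + Dt a1 (t₀,0) * Ds (Ds a0) (t₀,0))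
        = Dt (Ds a0) (t₀,0) * Ds a1 (t₀,0) - Dt (Ds a1) (t₀,0) * Ds a0 (t₀,0) := by
      rw [clairaut ha0, clairaut ha1, hz0, hz1]; ring
    have halg := alg_key (Dt (Dt a0) (t₀,0)) (Dt (Dt a1) (t₀,0))
      (Dt (Dt (Dt a0)) (t₀,0)) (Dt (Dt (Dt a1)) (t₀,0))
      (Ds a0 (t₀,0)) (Ds a1 (t₀,0)) (Dt (Ds a0) (t₀,0)) (Dt (Ds a1) (t₀,0))
      hnz (by linear_combination hE1) (by linear_combination hE2)
    rw [hdval]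
    first
      | exact halg.1
      | exact halg.2
  }

end OC


lemma deriv_component {F : ℝ → R3} {t : ℝ} (hF : DifferentiableAt ℝ F t) (i : Fin 3) :
    deriv (fun t => F t i) t = deriv F t i := by
  have h := (ContinuousLinearMap.proj (R := ℝ) (φ := fun _ : Fin 3 => ℝ) i).hasFDerivAt.comp_hasDerivAt t hF.hasDerivAt
  exact h.deriv

lemma fderiv_component {Ah : ℝ × ℝ → R3} {q : ℝ × ℝ} (h : DifferentiableAt ℝ Ah q)
    (i : Fin 3) (v : ℝ × ℝ) :
    fderiv ℝ (fun p => Ah p i) q v = fderiv ℝ Ah q v i := by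
  have := ((ContinuousLinearMap.proj (R := ℝ) (φ := fun _ : Fin 3 => ℝ) i).hasFDerivAt.comp q h.hasFDerivAt).fderiv
  rw [show (fun p => Ah p i) = (⇑(ContinuousLinearMap.proj (R := ℝ) (φ := fun _ : Fin 3 => ℝ) i) ∘ Ah) from rfl, this]; rfl

lemma dot3_cross3_e3 (X Y : R3) : dot3 (cross3 X Y) e3 = X 0 * Y 1 - X 1 * Y 0 := by
  simp [dot3, cross3, e3, Fin.sum_univ_three]

lemma pos_of_hasDerivAt_pos {f : ℝ → ℝ} (h0 : f 0 = 0) {d : ℝ}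
    (hd : HasDerivAt f d 0) (hdpos : 0 < d) : ∃ s > 0, 0 < f s := by
  have h1 : Tendsto (slope f 0) (𝓝[≠] (0:ℝ)) (𝓝 d) := hasDerivAt_iff_tendsto_slope.mp hd
  have h2 : Tendsto (slope f 0) (𝓝[>] (0:ℝ)) (𝓝 d) :=
    h1.mono_left (nhdsWithin_mono _ (fun x hx => ne_of_gt hx))
  have h3 : ∀ᶠ s in 𝓝[>] (0:ℝ), 0 < slope f 0 s := h2.eventually (eventually_gt_nhds hdpos)
  obtain ⟨s, hs1, hs2⟩ := (h3.and self_mem_nhdsWithin).exists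
  refine ⟨s, hs2, ?_⟩
  have hsl : slope f 0 s = f s / s := by simp [slope, h0]; ring
  rw [hsl] at hs1
  have := mul_pos hs1 hs2
  rwa [div_mul_cancel₀] at this
  exact ne_of_gt hs2


/-- a planar closed curve containing both a right-handed and a
left-handed cusp is not the projection of a profile curve of any immersed
surface in `ℝ³`. -/
theorem no_profile_projection_with_opposite_cusps
    (c : ℝ → R3)
    (hplanar : ∀ t, c t 2 = 0)
    (hper : Function.Periodic c 1)
    (hcusps : ∃ t₁ t₂, RightCuspAt c t₁ ∧ LeftCuspAt c t₂) :
    ¬ ∃ γ : ℝ → R3, ProfileOfImmersedSurface γ ∧ ∀ t, projxy (γ t) = c t := by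
  rintro ⟨γ, ⟨hloop, A, hA, hA0, h3, h4, h5⟩, hproj⟩
  obtain ⟨t₁, t₂, ⟨hcu1, hsg1⟩, hcu2, hsg2⟩ := hcusps
  have ha : ∀ i : Fin 3, ContDiff ℝ (⊤ : ℕ∞) (fun q : ℝ × ℝ => A q.1 q.2 i) := fun i =>
    contDiff_pi.mp hA i
  -- conversion of the derivatives in the hypotheses to directional partials
  have hP : ∀ t s (i : Fin 3), deriv (fun u => A u s) t i
      = OC.Dt (fun q : ℝ × ℝ => A q.1 q.2 i) (t, s) := by
    intro t s i
    have h1 : deriv (fun u => A u s) t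
        = fderiv ℝ (fun q : ℝ × ℝ => A q.1 q.2) (t, s) (1, 0) :=
      (OC.hasDerivAt_fst hA t s).deriv
    rw [h1]
    exact (fderiv_component (hA.differentiable (by simp) (t, s)) i (1, 0)).symm
  have hQ : ∀ t s (i : Fin 3), deriv (A t) s i
      = OC.Ds (fun q : ℝ × ℝ => A q.1 q.2 i) (t, s) := by
    intro t s i
    have h1 : deriv (A t) s
        = fderiv ℝ (fun q : ℝ × ℝ => A q.1 q.2) (t, s) (0, 1) :=
      (OC.hasDerivAt_snd hA t s).deriv
    rw [h1]
    exact (fderiv_component (hA.differentiable (by simp) (t, s)) i (0, 1)).symm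
  set a0 : ℝ × ℝ → ℝ := fun q => A q.1 q.2 0 with ha0def
  set a1 : ℝ × ℝ → ℝ := fun q => A q.1 q.2 1 with ha1def
  -- the fold identity and its strictness off the fold
  have hg0 : ∀ t, OC.Dt a0 (t,0) * OC.Ds a1 (t,0) - OC.Dt a1 (t,0) * OC.Ds a0 (t,0) = 0 := by
    intro t
    have h := h4 t
    rw [dot3_cross3_e3, hP t 0 0, hQ t 0 1, hP t 0 1, hQ t 0 0] at h
    exact h
  have hgne : ∀ t s, s ≠ 0 →
      OC.Dt a0 (t,s) * OC.Ds a1 (t,s) - OC.Dt a1 (t,s) * OC.Ds a0 (t,s) ≠ 0 := by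
    intro t s hs
    have h := h5 t s hs
    rw [dot3_cross3_e3, hP t s 0, hQ t s 1, hP t s 1, hQ t s 0] at h
    exact h
  -- basic facts about c
  have hceq : ∀ t, c t = projxy (A t 0) := by
    intro t; rw [← hproj t, hA0 t]
  have hc0 : ∀ t, c t 0 = a0 (t, 0) := by
    intro t; rw [hceq t]; simp [projxy, ha0def]
  have hc1 : ∀ t, c t 1 = a1 (t, 0) := by
    intro t; rw [hceq t]; simp [projxy, ha1def]
  have hline : ContDiff ℝ (⊤ : ℕ∞) (fun t : ℝ => ((t : ℝ), (0 : ℝ))) :=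
    contDiff_id.prodMk contDiff_const
  have hcsm : ContDiff ℝ (⊤ : ℕ∞) c := by
    apply contDiff_pi.mpr
    intro i
    fin_cases i
    · have : (fun t => c t 0) = fun t => a0 (t, 0) := funext hc0
      rw [show (fun t => c t (⟨0, by norm_num⟩ : Fin 3)) = (fun t => c t 0) from rfl, this]
      exact (ha 0).comp hline
    · have : (fun t => c t 1) = fun t => a1 (t, 0) := funext hc1
      rw [show (fun t => c t (⟨1, by norm_num⟩ : Fin 3)) = (fun t => c t 1) from rfl, this]
      exact (ha 1).comp hline
    · have : (fun t => c t 2) = fun _ => (0:ℝ) := funext hplanar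
      rw [show (fun t => c t (⟨2, by norm_num⟩ : Fin 3)) = (fun t => c t 2) from rfl, this]
      exact contDiff_const
  have hdiff1 : Differentiable ℝ (deriv c) := by
    have := hcsm.differentiable_iteratedDeriv 1 (by simp)
    rwa [iteratedDeriv_one] at this
  have hdiff2 : Differentiable ℝ (iteratedDeriv 2 c) :=
    hcsm.differentiable_iteratedDeriv 2 (WithTop.coe_lt_coe.mpr (ENat.coe_lt_top 2))
  -- derivative chains for components of c
  have chain : ∀ b : ℝ × ℝ → ℝ, ContDiff ℝ (⊤ : ℕ∞) b → ∀ i : Fin 3, (∀ t, c t i = b (t, 0)) →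
      (∀ t, deriv c t i = OC.Dt b (t, 0)) ∧
      (∀ t, iteratedDeriv 2 c t i = OC.Dt (OC.Dt b) (t, 0)) ∧
      (∀ t, iteratedDeriv 3 c t i = OC.Dt (OC.Dt (OC.Dt b)) (t, 0)) := by
    intro b hb i hcb
    have h1 : ∀ t, deriv c t i = OC.Dt b (t, 0) := by
      intro t
      rw [← deriv_component (hcsm.differentiable (by simp) t) i]
      have he : (fun t => c t i) = fun t => b (t, 0) := funext hcb
      rw [he]
      exact (OC.hasDerivAt_fst hb t 0).deriv
    have h2 : ∀ t, iteratedDeriv 2 c t i = OC.Dt (OC.Dt b) (t, 0) := by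
      intro t
      rw [iteratedDeriv_succ, iteratedDeriv_one]
      rw [← deriv_component (hdiff1 t) i]
      have he : (fun t => deriv c t i) = fun t => OC.Dt b (t, 0) := funext h1
      rw [he]
      exact (OC.hasDerivAt_fst (OC.contDiff_Dt hb) t 0).deriv
    refine ⟨h1, h2, ?_⟩
    intro t
    rw [show iteratedDeriv 3 c = deriv (iteratedDeriv 2 c) from iteratedDeriv_succ]
    rw [← deriv_component (hdiff2 t) i]
    have he : (fun t => iteratedDeriv 2 c t i) = fun t => OC.Dt (OC.Dt b) (t, 0) := funext h2
    rw [he]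
    exact (OC.hasDerivAt_fst (OC.contDiff_Dt (OC.contDiff_Dt hb)) t 0).deriv
  obtain ⟨hd0, hi20, hi30⟩ := chain a0 (ha 0) 0 hc0
  obtain ⟨hd1, hi21, hi31⟩ := chain a1 (ha 1) 1 hc1
  -- main per-cusp statement
  have percusp : ∀ t₀, IsCuspAt c t₀ → ∃ d : ℝ,
      HasDerivAt (fun s => OC.Dt a0 (t₀,s) * OC.Ds a1 (t₀,s)
        - OC.Dt a1 (t₀,s) * OC.Ds a0 (t₀,s)) d 0 ∧
      det2 (iteratedDeriv 2 c t₀) (iteratedDeriv 3 c t₀) * d ≤ 0 ∧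
      (det2 (iteratedDeriv 2 c t₀) (iteratedDeriv 3 c t₀) ≠ 0 → d ≠ 0) := by
    intro t₀ hcusp
    have hz0 : OC.Dt a0 (t₀, 0) = 0 := by
      have h := congrFun hcusp 0
      simp only [projxy, Matrix.cons_val_zero, Pi.zero_apply] at h
      rw [hd0 t₀] at h
      exact h
    have hz1 : OC.Dt a1 (t₀, 0) = 0 := by
      have h := congrFun hcusp 1
      simp only [projxy, Matrix.cons_val_one, Matrix.head_cons, Pi.zero_apply] at h
      rw [hd1 t₀] at h
      exact h
    have hnz : ¬ (OC.Ds a0 (t₀, 0) = 0 ∧ OC.Ds a1 (t₀, 0) = 0) := by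
      rintro ⟨e0, e1⟩
      apply h3 t₀ 0
      funext i
      fin_cases i
      · show deriv (fun u => A u 0) t₀ 1 * deriv (A t₀) 0 2
          - deriv (fun u => A u 0) t₀ 2 * deriv (A t₀) 0 1 = 0
        rw [hP t₀ 0 1, hQ t₀ 0 1, hz1, e1]; ring
      · show deriv (fun u => A u 0) t₀ 2 * deriv (A t₀) 0 0
          - deriv (fun u => A u 0) t₀ 0 * deriv (A t₀) 0 2 = 0
        rw [hP t₀ 0 0, hQ t₀ 0 0, hz0, e0]; ring
      · show deriv (fun u => A u 0) t₀ 0 * deriv (A t₀) 0 1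
          - deriv (fun u => A u 0) t₀ 1 * deriv (A t₀) 0 0 = 0
        rw [hP t₀ 0 0, hP t₀ 0 1, hz0, hz1]; ring
    obtain ⟨d, hder, hle, hne⟩ := OC.cusp_key a0 a1 (ha 0) (ha 1) t₀ hg0 hz0 hz1 hnz
    have hdet : det2 (iteratedDeriv 2 c t₀) (iteratedDeriv 3 c t₀)
        = OC.Dt (OC.Dt a0) (t₀,0) * OC.Dt (OC.Dt (OC.Dt a1)) (t₀,0)
          - OC.Dt (OC.Dt a1) (t₀,0) * OC.Dt (OC.Dt (OC.Dt a0)) (t₀,0) := by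
      show iteratedDeriv 2 c t₀ 0 * iteratedDeriv 3 c t₀ 1
          - iteratedDeriv 2 c t₀ 1 * iteratedDeriv 3 c t₀ 0 = _
      rw [hi20 t₀, hi30 t₀, hi21 t₀, hi31 t₀]
    rw [hdet]
    exact ⟨d, hder, hle, hne⟩
  -- positive side sign at the right cusp
  obtain ⟨d1, hder1, hle1, hne1⟩ := percusp t₁ hcu1
  obtain ⟨d2, hder2, hle2, hne2⟩ := percusp t₂ hcu2
  have hd1pos : 0 < d1 := by
    have h := hne1 (ne_of_lt hsg1)
    rcases lt_trichotomy d1 0 with h' | h' | h'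
    · nlinarith
    · exact absurd h' h
    · exact h'
  have hd2neg : d2 < 0 := by
    have h := hne2 (ne_of_gt hsg2)
    rcases lt_trichotomy d2 0 with h' | h' | h'
    · exact h'
    · exact absurd h' h
    · nlinarith
  obtain ⟨s1, hs1pos, hgpos⟩ := pos_of_hasDerivAt_pos (hg0 t₁) hder1 hd1pos
  have hneg0 : (fun s => -(OC.Dt a0 (t₂,s) * OC.Ds a1 (t₂,s)
      - OC.Dt a1 (t₂,s) * OC.Ds a0 (t₂,s))) 0 = 0 := by
    simp only [hg0 t₂, neg_zero]
  obtain ⟨s2, hs2pos, hgneg'⟩ := pos_of_hasDerivAt_pos hneg0 hder2.neg (by linarith)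
  have hgneg : OC.Dt a0 (t₂,s2) * OC.Ds a1 (t₂,s2)
      - OC.Dt a1 (t₂,s2) * OC.Ds a0 (t₂,s2) < 0 := by
    simpa using hgneg'
  -- intermediate value theorem on the connected upper half plane
  have hgcont : Continuous (fun z : ℝ × ℝ => OC.Dt a0 z * OC.Ds a1 z
      - OC.Dt a1 z * OC.Ds a0 z) :=
    (((OC.contDiff_Dt (ha 0)).mul (OC.contDiff_Ds (ha 1))).sub
      ((OC.contDiff_Dt (ha 1)).mul (OC.contDiff_Ds (ha 0)))).continuous
  have hconn : IsPreconnected ((univ : Set ℝ) ×ˢ Ioi (0:ℝ)) :=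
    isPreconnected_univ.prod isPreconnected_Ioi
  obtain ⟨x, hxS, hx0⟩ := hconn.intermediate_value₂
    (a := ((t₂ : ℝ), s2)) (b := ((t₁ : ℝ), s1))
    (Set.mk_mem_prod (mem_univ _) hs2pos) (Set.mk_mem_prod (mem_univ _) hs1pos)
    hgcont.continuousOn continuousOn_const (le_of_lt hgneg) (le_of_lt hgpos)
  exact hgne x.1 x.2 (ne_of_gt hxS.2) hx0

end
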